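/- Let R be the morphism on {a,b}* defined by R(a) = a, R(b) = ba, and let t be an infinite binary word such that R(t) = s where s is a Sturmian word whose first letter is b. Then t is also a Sturmian word. -/

import Mathlib

/-- Letters: `false` plays the role of `a`, `true` the role of `b`.
A finite word `u` is a factor of the infinite word `s`. -/
def FactorOf (s : ℕ → Bool) (u : List Bool) : Prop :=
  ∃ i : ℕ, u = (List.range u.length).map fun k => s (i + k)

/-- `u` is a (finite) prefix of the infinite word `s`. -/
def PrefixOf (s : ℕ → Bool) (u : List Bool) : Prop :=
  u = (List.range u.length).map s

def EventuallyPeriodic (s : ℕ → Bool) : Prop :=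
  ∃ p > 0, ∃ N, ∀ n ≥ N, s (n + p) = s n

/-- `s` is balanced: counts of each letter in equal-length factors differ by at most 1. -/
def BalancedW (s : ℕ → Bool) : Prop :=
  ∀ u v, FactorOf s u → FactorOf s v → u.length = v.length →
    ∀ x : Bool, |(u.count x : ℤ) - (v.count x : ℤ)| ≤ 1

/-- A Sturmian word: aperiodic and balanced. -/
def Sturmian (s : ℕ → Bool) : Prop :=
  ¬ EventuallyPeriodic s ∧ BalancedW s

/-- `u` is rich in the letter `x` (with respect to `s`). -/
def RichIn (s : ℕ → Bool) (u : List Bool) (x : Bool) : Prop :=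
  ∃ v, FactorOf s v ∧ v.length = u.length ∧ v.count x < u.count x

/-- `s = U 0 ++ U 1 ++ ⋯` with all the `U i` non-empty. -/
def Factorization (s : ℕ → Bool) (U : ℕ → List Bool) : Prop :=
  (∀ i, U i ≠ []) ∧ ∀ n, PrefixOf s (((List.range n).map U).flatten)

/-- The morphism `R : a ↦ a, b ↦ ba`. -/
def Rmor : Bool → List Bool := fun x => if x then [true, false] else [false]

/-- The morphism `L : a ↦ a, b ↦ ab`. -/
def Lmor : Bool → List Bool := fun x => if x then [false, true] else [false]

/-- `s` is the image of the infinite word `t` under the substitution `m`. -/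
def SubstEq (m : Bool → List Bool) (t s : ℕ → Bool) : Prop :=
  ∀ n, PrefixOf s (((List.range n).map fun i => m (t i)).flatten)

section Aux
variable {s t : ℕ → Bool}

lemma factorOf_getElem {u : List Bool} (h : FactorOf s u) :
    ∃ i, ∀ k (hk : k < u.length), u[k] = s (i + k) := by
  obtain ⟨i, hi⟩ := h
  refine ⟨i, fun k hk => ?_⟩
  rw [List.getElem_of_eq hi hk]
  simp

lemma factorOf_mk {u : List Bool} {i : ℕ}
    (h : ∀ k (hk : k < u.length), u[k] = s (i + k)) : FactorOf s u := by
  refine ⟨i, List.ext_getElem (by simp) fun k h1 h2 => ?_⟩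
  simpa using h k h1

lemma factorOf_infix {u w : List Bool} (hw : FactorOf s w)
    (h : u <:+: w) : FactorOf s u := by
  obtain ⟨i, hi⟩ := factorOf_getElem hw
  obtain ⟨x, y, hxy⟩ := h
  subst hxy
  apply factorOf_mk (i := i + x.length)
  intro k hk
  have hlen : x.length + k < (x ++ u ++ y).length := by
    simp [List.length_append]; omega
  have h2 := hi (x.length + k) hlen
  have e3 : (x ++ u ++ y)[x.length + k]'hlen
      = (x ++ (u ++ y))[x.length + k]'(by simpa [List.append_assoc] using hlen) :=
    List.getElem_of_eq (List.append_assoc x u y) _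
  rw [e3, List.getElem_append_right (by omega)] at h2
  simp only [Nat.add_sub_cancel_left] at h2
  rw [List.getElem_append_left hk] at h2
  rw [h2, Nat.add_assoc]

lemma prefixOf_getElem {w : List Bool} (h : PrefixOf s w) (k : ℕ) (hk : k < w.length) :
    w[k] = s k := by
  rw [List.getElem_of_eq h hk]
  simp

lemma factorOf_of_prefixOf {w : List Bool} (h : PrefixOf s w) : FactorOf s w := by
  apply factorOf_mk (i := 0)
  intro k hk
  simpa using prefixOf_getElem h k hk

end Aux

section Key
variable {t : ℕ → Bool}

/-- The target pattern: `t` contains `0w0` and `1w1`. -/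
def Pat (t : ℕ → Bool) : Prop :=
  ∃ w : List Bool, FactorOf t (false :: (w ++ [false])) ∧ FactorOf t (true :: (w ++ [true]))

lemma factor_tail {a : Bool} {u : List Bool} (h : FactorOf t (a :: u)) : FactorOf t u :=
  factorOf_infix h ⟨[a], [], by simp⟩

lemma key (t : ℕ → Bool) : ∀ n : ℕ,
    (∀ u v : List Bool, FactorOf t u → FactorOf t v → u.length = v.length →
      u.length = n → v.count true + 2 ≤ u.count true → Pat t) ∧
    (∀ w u v : List Bool, FactorOf t (true :: (w ++ u)) → FactorOf t (false :: (w ++ v)) →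
      u.length = v.length → u.length = n → v.count true + 1 ≤ u.count true → Pat t) := by
  intro n
  induction n using Nat.strong_induction_on with
  | _ n IH =>
  constructor
  · intro u v fu fv hlen hn hcnt
    match u, v with
    | [], v => simp at hcnt
    | a :: u', b :: v' =>
      have hlen' : u'.length = v'.length := by simpa using hlen
      have hn' : u'.length = n - 1 ∧ n - 1 < n := by simp at hn; omega
      have fu' := factor_tail fu
      have fv' := factor_tail fv
      cases a <;> cases b
      · -- a = false, b = false
        refine (IH (n-1) hn'.2).1 u' v' fu' fv' hlen' hn'.1 ?_
        simp [List.count_cons] at hcnt ⊢; omega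
      · -- a = false, b = true : tails differ by ≥ 3
        refine (IH (n-1) hn'.2).1 u' v' fu' fv' hlen' hn'.1 ?_
        simp [List.count_cons] at hcnt ⊢; omega
      · -- a = true, b = false
        refine (IH (n-1) hn'.2).2 [] u' v' (by simpa using fu) (by simpa using fv)
          hlen' hn'.1 ?_
        simp [List.count_cons] at hcnt ⊢; omega
      · -- a = true, b = true
        refine (IH (n-1) hn'.2).1 u' v' fu' fv' hlen' hn'.1 ?_
        simp [List.count_cons] at hcnt ⊢; omega
  · intro w u v fu fv hlen hn hcnt
    match u, v with
    | [], v => simp at hcnt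
    | c :: u'', d :: v'' =>
      have hlen' : u''.length = v''.length := by simpa using hlen
      have hn' : u''.length = n - 1 ∧ n - 1 < n := by simp at hn; omega
      cases c <;> cases d
      · -- c = false, d = false
        refine (IH (n-1) hn'.2).2 (w ++ [false]) u'' v''
          (by simpa [List.append_assoc] using fu)
          (by simpa [List.append_assoc] using fv) hlen' hn'.1 ?_
        simp [List.count_cons] at hcnt ⊢; omega
      · -- c = false, d = true : call part 1 on tails
        refine (IH (n-1) hn'.2).1 u'' v''
          (factorOf_infix fu ⟨true :: w ++ [false], [], by simp⟩)
          (factorOf_infix fv ⟨false :: w ++ [true], [], by simp⟩)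
          hlen' hn'.1 ?_
        simp [List.count_cons] at hcnt ⊢; omega
      · -- c = true, d = false : found the pattern
        refine ⟨w, ?_, ?_⟩
        · exact factorOf_infix fv ⟨[], v'', by simp⟩
        · exact factorOf_infix fu ⟨[], u'', by simp⟩
      · -- c = true, d = true
        refine (IH (n-1) hn'.2).2 (w ++ [true]) u'' v''
          (by simpa [List.append_assoc] using fu)
          (by simpa [List.append_assoc] using fv) hlen' hn'.1 ?_
        simp [List.count_cons] at hcnt ⊢; omega

lemma count_tf (u : List Bool) : u.count true + u.count false = u.length := by
  induction u with
  | nil => simp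
  | cons a l ih => cases a <;> simp [List.count_cons] <;> omega

lemma pat_of_not_balanced (h : ¬ BalancedW t) : Pat t := by
  unfold BalancedW at h
  push_neg at h
  obtain ⟨u, v, fu, fv, hlen, x, hx⟩ := h
  have hx' : 1 < |(u.count true : ℤ) - v.count true| := by
    cases x
    · have h1 := count_tf u
      have h2 := count_tf v
      have e : (u.count false : ℤ) - v.count false = -((u.count true : ℤ) - v.count true) := by
        omega
      rwa [e, abs_neg] at hx
    · exact hx
  have : v.count true + 2 ≤ u.count true ∨ u.count true + 2 ≤ v.count true := by
    rcases abs_cases ((u.count true : ℤ) - (v.count true : ℤ)) with ⟨h1, h2⟩ | ⟨h1, h2⟩ <;>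
      rw [h1] at hx' <;> omega
  rcases this with h | h
  · exact (key t u.length).1 u v fu fv hlen rfl h
  · exact (key t v.length).1 v u fv fu hlen.symm rfl h
end Key

section Sub
variable {s t : ℕ → Bool}

/-- Prefix of `s` consisting of the first `n` blocks. -/
def Jw (t : ℕ → Bool) (n : ℕ) : List Bool :=
  ((List.range n).map fun i => Rmor (t i)).flatten

def posw (t : ℕ → Bool) (n : ℕ) : ℕ := (Jw t n).length

/-- Image of a finite word under `Rmor`. -/
def Rimg (u : List Bool) : List Bool := (u.map Rmor).flatten

lemma Jw_succ (n : ℕ) : Jw t (n+1) = Jw t n ++ Rmor (t n) := by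
  simp [Jw, List.range_succ]

lemma Rmor_length_pos (x : Bool) : 0 < (Rmor x).length := by
  cases x <;> simp [Rmor]

lemma posw_succ (n : ℕ) : posw t (n+1) = posw t n + (Rmor (t n)).length := by
  simp [posw, Jw_succ]

lemma posw_zero : posw t 0 = 0 := by simp [posw, Jw]

lemma le_posw (n : ℕ) : n ≤ posw t n := by
  induction n with
  | zero => simp [posw_zero]
  | succ n ih => have := Rmor_length_pos (t n); rw [posw_succ]; omega

lemma ht_prefix (ht : SubstEq Rmor t s) (n : ℕ) : PrefixOf s (Jw t n) := ht n

lemma factorOf_s_of_infix (ht : SubstEq Rmor t s) {u : List Bool} (n : ℕ)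
    (h : u <:+: Jw t n) : FactorOf s u :=
  factorOf_infix (factorOf_of_prefixOf (ht_prefix ht n)) h

lemma Jw_add (i m : ℕ) :
    Jw t (i + m) = Jw t i ++ Rimg ((List.range m).map fun k => t (i + k)) := by
  simp [Jw, Rimg, List.range_add, List.map_map, Function.comp_def]

lemma Rimg_factor {u : List Bool} {i : ℕ}
    (hu : u = (List.range u.length).map fun k => t (i + k)) :
    Jw t (i + u.length) = Jw t i ++ Rimg u := by
  rw [Jw_add, ← hu]

/-- image of a factor of `t` is a factor of `s`. -/
lemma factorOf_Rimg (ht : SubstEq Rmor t s) {u : List Bool} (hu : FactorOf t u) :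
    FactorOf s (Rimg u) := by
  obtain ⟨i, hi⟩ := hu
  exact factorOf_s_of_infix ht (i + u.length) ⟨Jw t i, [], by rw [Rimg_factor hi]; simp⟩

lemma Rmor_ends (x : Bool) : ∃ z, Rmor x = z ++ [false] := by
  cases x
  · exact ⟨[], rfl⟩
  · exact ⟨[true], rfl⟩

/-- the first letter of `t` is `true` -/
lemma t_zero (ht : SubstEq Rmor t s) (hb : s 0 = true) : t 0 = true := by
  by_contra h
  have h0 : t 0 = false := by simpa using h
  have hp := ht_prefix ht 1
  have hJ : Jw t 1 = [false] := by simp [Jw, List.range_succ, h0, Rmor]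
  rw [hJ] at hp
  have := prefixOf_getElem hp 0 (by simp)
  simp [hb] at this

/-- if a factor of `t` occurs at a positive position, its image preceded by `false`
is a factor of `s`. -/
lemma factorOf_false_Rimg (ht : SubstEq Rmor t s) {u : List Bool} {i : ℕ}
    (hu : u = (List.range u.length).map fun k => t (i + k)) (hi : 0 < i) :
    FactorOf s (false :: Rimg u) := by
  obtain ⟨j, rfl⟩ : ∃ j, i = j + 1 := ⟨i - 1, by omega⟩
  obtain ⟨z, hz⟩ := Rmor_ends (t j)
  refine factorOf_s_of_infix ht (j + 1 + u.length) ⟨Jw t j ++ z, [], ?_⟩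
  rw [Rimg_factor hu, Jw_succ, hz]
  simp

lemma Rimg_append (u v : List Bool) : Rimg (u ++ v) = Rimg u ++ Rimg v := by
  simp [Rimg]

lemma Rimg_cons (a : Bool) (u : List Bool) : Rimg (a :: u) = Rmor a ++ Rimg u := by
  simp [Rimg]

end Sub

section Main
variable {s t : ℕ → Bool}

lemma s_block (ht : SubstEq Rmor t s) (i k : ℕ) (hk : k < (Rmor (t i)).length) :
    s (posw t i + k) = (Rmor (t i))[k] := by
  have hlt : posw t i + k < posw t (i+1) := by rw [posw_succ]; omega
  have h1 := prefixOf_getElem (ht_prefix ht (i+1)) (posw t i + k) hlt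
  rw [← h1, List.getElem_of_eq (Jw_succ i) hlt]
  have h2 : (Jw t i).length ≤ posw t i + k := Nat.le_add_right _ _
  rw [List.getElem_append_right h2]
  congr 1
  simp [posw]

lemma aperiodic_t (ht : SubstEq Rmor t s) (hs1 : ¬ EventuallyPeriodic s) :
    ¬ EventuallyPeriodic t := by
  rintro ⟨p, hp, N, hper⟩
  apply hs1
  set q := posw t (N+p) - posw t N with hq
  have posw_add_ge : ∀ n m : ℕ, posw t n + m ≤ posw t (n + m) := by
    intro n m
    induction m with
    | zero => simp
    | succ m ih =>
      rw [show n + (m+1) = (n+m)+1 from rfl, posw_succ]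
      have := Rmor_length_pos (t (n+m)); omega
  have hqp : p ≤ q := by have := posw_add_ge N p; omega
  have hshift : ∀ i, N ≤ i → posw t (i + p) = posw t i + q := by
    intro i hi
    induction i, hi using Nat.le_induction with
    | base => have := posw_add_ge N p; omega
    | succ i hi ih =>
      have e : i + 1 + p = (i + p) + 1 := by omega
      rw [e, posw_succ, posw_succ, hper i hi, ih]; omega
  refine ⟨q, by omega, posw t N, fun m hm => ?_⟩
  have hdec : DecidablePred fun j => posw t j ≤ m := fun j => Nat.decLe _ _
  set i := Nat.findGreatest (fun j => posw t j ≤ m) m with hidef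
  have hile : posw t i ≤ m :=
    Nat.findGreatest_spec (P := fun j => posw t j ≤ m) (Nat.zero_le m) (by simp [posw_zero])
  have hnext : m < posw t (i+1) := by
    by_contra hcon
    push_neg at hcon
    have h1 : i + 1 ≤ m := le_trans (le_posw (i+1)) hcon
    have := Nat.le_findGreatest (P := fun j => posw t j ≤ m) h1 hcon
    omega
  have hNi : N ≤ i := Nat.le_findGreatest (P := fun j => posw t j ≤ m) (le_trans (le_posw N) hm) hm
  set k := m - posw t i with hk
  have hkb : k < (Rmor (t i)).length := by
    have := posw_succ (t := t) i; omega
  have e1 : s m = (Rmor (t i))[k]'hkb := by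
    rw [show m = posw t i + k from by omega]
    exact s_block ht i k hkb
  have hk2 : k < (Rmor (t (i+p))).length := by rw [hper i hNi]; exact hkb
  have e2 : s (m + q) = (Rmor (t (i+p)))[k]'hk2 := by
    rw [show m + q = posw t (i+p) + k from by rw [hshift i hNi]; omega]
    exact s_block ht (i+p) k hk2
  rw [e1, e2]
  exact List.getElem_of_eq (congrArg Rmor (hper i hNi)) _

lemma balanced_t (ht : SubstEq Rmor t s) (hb : s 0 = true) (hs2 : BalancedW s) :
    BalancedW t := by
  by_contra h
  obtain ⟨w, h0, h1⟩ := pat_of_not_balanced h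
  set v : List Bool := false :: Rimg w with hv
  -- the occurrence of 0w0 in t is at a positive position
  obtain ⟨i, hi⟩ := h0
  have hipos : 0 < i := by
    rcases Nat.eq_zero_or_pos i with rfl | hp
    · have h00 : (false :: (w ++ [false]))[0]'(by simp) = t (0 + 0) := by
        rw [List.getElem_of_eq hi (by simp)]; simp
      have := t_zero ht hb
      simp [this] at h00
    · exact hp
  have F1 : FactorOf s (false :: (v ++ [false])) := by
    have := factorOf_false_Rimg ht hi hipos
    have e : false :: Rimg (false :: (w ++ [false])) = false :: (v ++ [false]) := by
      simp [hv, Rimg_cons, Rimg_append, Rimg, Rmor]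
    rwa [e] at this
  have F2 : FactorOf s (true :: (v ++ [true])) := by
    have h2 := factorOf_Rimg ht h1
    refine factorOf_infix h2 ⟨[], [false], ?_⟩
    simp [hv, Rimg_cons, Rimg_append, Rimg, Rmor]
  have hbal := hs2 _ _ F1 F2 (by simp) false
  have e : ((false :: (v ++ [false])).count false : ℤ)
      - ((true :: (v ++ [true])).count false : ℤ) = 2 := by
    simp [List.count_cons, List.count_append]
    ring
  rw [e] at hbal
  norm_num at hbal

end Main


/-- If `R(t) = s` with `s` Sturmian beginning with the letter `b`, then `t` is Sturmian. -/
theorem stmt_8 (s t : ℕ → Bool) (hs : Sturmian s) (hb : s 0 = true)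
    (ht : SubstEq Rmor t s) :
    Sturmian t := by
  exact ⟨aperiodic_t ht hs.1, balanced_t ht hb hs.2⟩
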